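/- arXiv:2207.01170 — 2 statements merged into one kernel-verified Lean document; each statement's English description precedes it below -/
import Mathlib

section
/- Let (e_k) ⊆ (0,∞) be decreasing, let θ ∈ (1/2, 1), and suppose there exist k₀ ≥ 1 and C > 0 such that e_{k−1} − e_k ≥ C·e_k^{2θ} for all k ≥ k₀. Then there exists C₁ > 0 such that e_k ≤ C₁·k^{−1/(2θ−1)} for all k sufficiently large. -/
lemma bern_aux (β : ℝ) (hβ0 : 0 < β) (hβ1 : β < 1) {a b : ℝ} (ha : 0 < a) (hab : a ≤ b) :
    β * (b - a) * b ^ (-(β+1)) ≤ a ^ (-β) - b ^ (-β) := by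
  have hb : 0 < b := lt_of_lt_of_le ha hab
  set t := a / b with ht
  have ht0 : 0 < t := div_pos ha hb
  have ht1 : t ≤ 1 := (div_le_one hb).2 hab
  have hgm : t ^ β * (1:ℝ) ^ (1-β) ≤ β * t + (1-β) * 1 :=
    Real.geom_mean_le_arith_mean2_weighted hβ0.le (by linarith) ht0.le one_pos.le (by ring)
  have hgm' : t ^ β ≤ β * t + (1-β) := by
    simpa using hgm
  have htβ : 0 < t ^ β := Real.rpow_pos_of_pos ht0 β
  have htnβ : 0 < t ^ (-β) := Real.rpow_pos_of_pos ht0 (-β)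
  have h1 : t ^ (-β) * t ^ β = 1 := by
    rw [← Real.rpow_add ht0]; simp
  have hinv : 1 + β * (1 - t) ≤ t ^ (-β) := by
    nlinarith [mul_le_mul_of_nonneg_left hgm' htnβ.le, sq_nonneg (β * (1 - t))]
  have hat : a = t * b := by rw [ht, div_mul_cancel₀ a hb.ne']
  have hmul : a ^ (-β) = t ^ (-β) * b ^ (-β) := by
    rw [hat, Real.mul_rpow ht0.le hb.le]
  have hbnβ : 0 < b ^ (-β) := Real.rpow_pos_of_pos hb (-β)
  have hbb : b ^ (-(β+1)) = b ^ (-β) * b⁻¹ := by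
    rw [show -(β+1) = -β + (-1) by ring, Real.rpow_add hb, Real.rpow_neg_one]
  rw [hmul, hbb]
  have : β * (b - a) * b⁻¹ = β * (1 - t) := by
    field_simp [ht]
    rw [hat]; ring
  calc β * (b - a) * (b ^ (-β) * b⁻¹) = (β * (1 - t)) * b ^ (-β) := by
        rw [← this]; ring
    _ ≤ (t ^ (-β) - 1) * b ^ (-β) := by
        apply mul_le_mul_of_nonneg_right _ hbnβ.le
        linarith
    _ = t ^ (-β) * b ^ (-β) - b ^ (-β) := by ring

theorem sublinear_rate_of_KL_exponent (e : ℕ → ℝ) (he0 : ∀ k, 0 < e k)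
    (hdec : Antitone e) (θ : ℝ) (hθ1 : 1 / 2 < θ) (hθ2 : θ < 1)
    (k₀ : ℕ) (hk₀ : 1 ≤ k₀) (C : ℝ) (hC : 0 < C)
    (hrec : ∀ k, k₀ ≤ k → e (k - 1) - e k ≥ C * e k ^ (2 * θ)) :
    ∃ C₁ : ℝ, 0 < C₁ ∧
      ∀ᶠ k : ℕ in Filter.atTop, e k ≤ C₁ * (k : ℝ) ^ (-(1 / (2 * θ - 1))) := by
  set β : ℝ := 2 * θ - 1 with hβdef
  have hβ0 : 0 < β := by simp only [hβdef]; linarith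
  have hβ1 : β < 1 := by simp only [hβdef]; linarith
  set c : ℝ := min (β * C / 4) ((2 ^ β - 1) * e 0 ^ (-β)) with hcdef
  have h2β : (1:ℝ) < 2 ^ β := by
    calc (1:ℝ) = 2 ^ (0:ℝ) := by norm_num
    _ < 2 ^ β := Real.rpow_lt_rpow_of_exponent_lt one_lt_two hβ0
  have hc0 : 0 < c := by
    apply lt_min
    · positivity
    · have := Real.rpow_pos_of_pos (he0 0) (-β)
      nlinarith
  -- step inequality
  have hstep : ∀ k, k₀ ≤ k → c ≤ e k ^ (-β) - e (k - 1) ^ (-β) := by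
    intro k hk
    have hab : e k ≤ e (k - 1) := hdec (Nat.sub_le k 1)
    have ha : 0 < e k := he0 k
    have hb : 0 < e (k - 1) := he0 (k - 1)
    have hrk := hrec k hk
    by_cases h2 : e (k - 1) ≤ 2 * e k
    · -- t ≥ 1/2
      have hB := bern_aux β hβ0 hβ1 ha hab
      have hβ1' : β + 1 = 2 * θ := by simp [hβdef]
      have hchain : β * C / 4 ≤ e k ^ (-β) - e (k - 1) ^ (-β) := by
        refine le_trans ?_ hB
        have h1 : C * e k ^ (2*θ) ≤ e (k-1) - e k := hrk
        have hpos : 0 < e (k-1) ^ (-(β+1)) := Real.rpow_pos_of_pos hb _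
        have h3 : β * (C * e k ^ (2*θ)) * e (k-1) ^ (-(β+1)) ≤
            β * (e (k-1) - e k) * e (k-1) ^ (-(β+1)) := by
          apply mul_le_mul_of_nonneg_right _ hpos.le
          nlinarith
        refine le_trans ?_ h3
        -- show β*C/4 ≤ β*C * (e k / e (k-1))^(2θ)
        rw [hβ1']
        have hq : e k ^ (2*θ) * e (k-1) ^ (-(2*θ)) = (e k / e (k-1)) ^ (2*θ) := by
          rw [div_eq_mul_inv, Real.mul_rpow ha.le (by positivity),
            ← Real.rpow_neg_one (e (k-1)), ← Real.rpow_mul hb.le]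
          ring_nf
        have hq2 : ((1:ℝ)/4) ≤ (e k / e (k-1)) ^ (2*θ) := by
          have h12 : (1/2 : ℝ) ≤ e k / e (k-1) := by
            rw [le_div_iff₀ hb]; linarith
          calc ((1:ℝ)/4) = (1/2 : ℝ) ^ (2:ℝ) := by
                rw [show (2:ℝ) = ((2:ℕ):ℝ) by norm_num, Real.rpow_natCast]; norm_num
          _ ≤ (1/2 : ℝ) ^ (2*θ) :=
                Real.rpow_le_rpow_of_exponent_ge (by norm_num) (by norm_num) (by linarith)
          _ ≤ (e k / e (k-1)) ^ (2*θ) :=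
                Real.rpow_le_rpow (by norm_num) h12 (by linarith)
        calc β * C / 4 = (β * C) * (1/4) := by ring
        _ ≤ (β * C) * ((e k / e (k-1)) ^ (2*θ)) := by
              apply mul_le_mul_of_nonneg_left hq2 (by positivity)
        _ = β * (C * e k ^ (2*θ)) * e (k-1) ^ (-(2*θ)) := by rw [← hq]; ring
      exact le_trans (min_le_left _ _) hchain
    · -- e k < e (k-1)/2
      push_neg at h2
      have hhalf : e k ≤ e (k-1) / 2 := by linarith
      have hkey : 2 ^ β * e (k-1) ^ (-β) ≤ e k ^ (-β) := by
        have := Real.rpow_le_rpow_of_nonpos ha hhalf (neg_nonpos.2 hβ0.le)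
        calc 2 ^ β * e (k-1) ^ (-β) = (e (k-1) / 2) ^ (-β) := by
              rw [div_eq_mul_inv, Real.mul_rpow hb.le (by norm_num),
                ← Real.rpow_neg_one (2:ℝ), ← Real.rpow_mul (by norm_num : (0:ℝ) ≤ 2)]
              ring_nf
        _ ≤ e k ^ (-β) := this
      have hmono : e 0 ^ (-β) ≤ e (k-1) ^ (-β) :=
        Real.rpow_le_rpow_of_nonpos hb (hdec (Nat.zero_le _)) (neg_nonpos.2 hβ0.le)
      have hchain : (2 ^ β - 1) * e 0 ^ (-β) ≤ e k ^ (-β) - e (k-1) ^ (-β) := by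
        have h0 : (0:ℝ) < 2 ^ β - 1 := by linarith
        nlinarith [Real.rpow_pos_of_pos hb (-β)]
      exact le_trans (min_le_right _ _) hchain
  -- telescoping
  have hkey : ∀ n : ℕ, c * (n + 1) ≤ e (k₀ + n) ^ (-β) := by
    intro n
    induction n with
    | zero =>
      have h := hstep k₀ le_rfl
      have := Real.rpow_pos_of_pos (he0 (k₀ - 1)) (-β)
      push_cast
      simp only [Nat.add_zero]
      linarith
    | succ n ih =>
      have h := hstep (k₀ + n + 1) (by omega)
      have hsub : k₀ + n + 1 - 1 = k₀ + n := by omega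
      rw [hsub] at h
      push_cast
      push_cast at ih
      have : k₀ + (n + 1) = k₀ + n + 1 := by omega
      rw [this]
      linarith
  -- conclude
  refine ⟨(c/2) ^ (-(1/β)), Real.rpow_pos_of_pos (by linarith) _, ?_⟩
  rw [Filter.eventually_atTop]
  refine ⟨max (2 * k₀) 1, fun k hk => ?_⟩
  have hk2 : 2 * k₀ ≤ k := le_trans (le_max_left _ _) hk
  have hk1 : 1 ≤ k := le_trans (le_max_right _ _) hk
  have hkk₀ : k₀ ≤ k := by omega
  set n : ℕ := k - k₀ with hndef
  have hkn : k = k₀ + n := by omega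
  have hcast : (n:ℝ) = (k:ℝ) - (k₀:ℝ) := by
    rw [hndef, Nat.cast_sub hkk₀]
  have hkR : (2:ℝ) * k₀ ≤ (k:ℝ) := by exact_mod_cast hk2
  have hlb : c / 2 * k ≤ e k ^ (-β) := by
    have h := hkey n
    rw [← hkn] at h
    have : c / 2 * k ≤ c * (n + 1) := by
      rw [hcast]
      nlinarith
    linarith
  have hposk : (0:ℝ) < c / 2 * k := by
    have : (1:ℝ) ≤ (k:ℝ) := by exact_mod_cast hk1
    nlinarith
  have hekpos := he0 k
  have hfin : e k ≤ (c/2 * k) ^ (-(1/β)) := by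
    have h1 : (e k ^ (-β)) ^ (-(1/β)) ≤ (c/2 * k) ^ (-(1/β)) :=
      Real.rpow_le_rpow_of_nonpos hposk hlb (by rw [neg_nonpos]; positivity)
    have h2 : (e k ^ (-β)) ^ (-(1/β)) = e k := by
      rw [← Real.rpow_mul hekpos.le]
      have : -β * -(1/β) = 1 := by field_simp
      rw [this, Real.rpow_one]
    rwa [h2] at h1
  have hsplit : (c/2 * k) ^ (-(1/β)) = (c/2) ^ (-(1/β)) * (k:ℝ) ^ (-(1/β)) :=
    Real.mul_rpow (by linarith) (Nat.cast_nonneg k)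
  rw [hsplit] at hfin
  exact hfin
end

section
/- Let f : ℝⁿ → (−∞,∞] be proper, lsc, convex, and positively homogeneous; let α ≥ 0, β > 0; let h(x) = α√(1+‖x‖²) + (β/2)‖x‖²; let λ > 0 and p ∈ ℝⁿ. Set v = Prox_{λf}(−p) and let t* > 0 be a solution of 1 − αt/√(1 + t²‖v‖²) − βt = 0 (for v = 0 interpret this as t* = 1/(α+β)). Then x* = t*·v is the unique minimizer of x ↦ λf(x) + ⟨x, p⟩ + h(x) over ℝⁿ. -/
open scoped RealInnerProductSpace

private lemma cs_aux {n : ℕ} (x y : EuclideanSpace ℝ (Fin n)) :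
    1 + ⟪x, y⟫ ≤ Real.sqrt (1 + ‖x‖ ^ 2) * Real.sqrt (1 + ‖y‖ ^ 2) := by
  have h1 : ⟪x, y⟫ ≤ ‖x‖ * ‖y‖ := real_inner_le_norm x y
  have h2 : Real.sqrt (1 + ‖x‖ ^ 2) * Real.sqrt (1 + ‖y‖ ^ 2)
      = Real.sqrt ((1 + ‖x‖ ^ 2) * (1 + ‖y‖ ^ 2)) := (Real.sqrt_mul (by positivity) _).symm
  rw [h2]
  rcases le_or_gt (1 + ⟪x, y⟫) 0 with hneg | hposi
  · exact hneg.trans (Real.sqrt_nonneg _)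
  · rw [Real.le_sqrt hposi.le (by positivity)]
    nlinarith [sq_nonneg (‖x‖ - ‖y‖), norm_nonneg x, norm_nonneg y]


theorem bregman_subproblem_positively_homogeneous (n : ℕ)
    (f : EuclideanSpace ℝ (Fin n) → EReal)
    (hne_bot : ∀ x, f x ≠ ⊥) (hproper : ∃ x, f x ≠ ⊤)
    (hlsc : LowerSemicontinuous f)
    (hconv : ∀ (x y : EuclideanSpace ℝ (Fin n)) (t : ℝ), 0 ≤ t → t ≤ 1 →
      f (t • x + (1 - t) • y) ≤ ((t : ℝ) : EReal) * f x + (((1 - t : ℝ)) : EReal) * f y)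
    (hpos : ∀ (x : EuclideanSpace ℝ (Fin n)) (t : ℝ), 0 < t → f (t • x) = ((t : ℝ) : EReal) * f x)
    (α β lam : ℝ) (hα : 0 ≤ α) (hβ : 0 < β) (hlam : 0 < lam)
    (p v : EuclideanSpace ℝ (Fin n))
    -- `v = Prox_{λ f}(-p)`
    (hv : ∀ y, (lam : EReal) * f v + ((‖v - (-p)‖ ^ 2 / 2 : ℝ) : EReal) ≤
      (lam : EReal) * f y + ((‖y - (-p)‖ ^ 2 / 2 : ℝ) : EReal))
    (tStar : ℝ) (htpos : 0 < tStar)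
    (ht : v ≠ 0 → 1 - α * tStar / Real.sqrt (1 + tStar ^ 2 * ‖v‖ ^ 2) - β * tStar = 0)
    (ht0 : v = 0 → tStar = 1 / (α + β)) :
    ∀ x : EuclideanSpace ℝ (Fin n), x ≠ tStar • v →
      (lam : EReal) * f (tStar • v) +
          ((⟪tStar • v, p⟫ + (α * Real.sqrt (1 + ‖tStar • v‖ ^ 2) +
            β / 2 * ‖tStar • v‖ ^ 2) : ℝ) : EReal) <
        (lam : EReal) * f x +
          ((⟪x, p⟫ + (α * Real.sqrt (1 + ‖x‖ ^ 2) + β / 2 * ‖x‖ ^ 2) : ℝ) : EReal) := by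
  intro x hx
  obtain ⟨x₀, hx₀⟩ := hproper
  have hlam' : (0 : EReal) < (lam : EReal) := by exact_mod_cast hlam
  have coe_val : ∀ z : EuclideanSpace ℝ (Fin n), f z ≠ ⊤ →
      f z = (((f z).toReal : ℝ) : EReal) :=
    fun z hz => (EReal.coe_toReal hz (hne_bot z)).symm
  -- `f v` is finite
  have hfv_ne_top : f v ≠ ⊤ := by
    intro h
    have h0 := hv x₀
    rw [h, EReal.mul_top_of_pos hlam', EReal.top_add_coe] at h0
    rw [coe_val x₀ hx₀, ← EReal.coe_mul, ← EReal.coe_add] at h0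
    exact (EReal.coe_lt_top _).not_ge h0
  set fv : ℝ := (f v).toReal with hfv_def
  have hfv : f v = (fv : EReal) := coe_val v hfv_ne_top
  -- key subgradient-type inequality coming from the prox property
  have key : ∀ (z : EuclideanSpace ℝ (Fin n)) (fz : ℝ), f z = (fz : EReal) →
      lam * fv ≤ lam * fz + ⟪z - v, v + p⟫ := by
    intro z fz hz
    have hstep : ∀ s : ℝ, 0 < s → s ≤ 1 →
        lam * fv ≤ lam * fz + ⟪z - v, v + p⟫ + s * (‖z - v‖ ^ 2 / 2) := by
      intro s hs hs1
      set y := s • z + (1 - s) • v with hy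
      have hcv := hconv z v s hs.le hs1
      have hcv' : f y ≤ ((s * fz + (1 - s) * fv : ℝ) : EReal) := by
        rw [hz, hfv] at hcv
        rw [EReal.coe_add, EReal.coe_mul, EReal.coe_mul]
        exact hcv
      have hy_ne_top : f y ≠ ⊤ := by
        intro h
        rw [h] at hcv'
        exact (EReal.coe_lt_top _).not_ge hcv'
      set fy : ℝ := (f y).toReal with hfy_def
      have hfy : f y = (fy : EReal) := coe_val y hy_ne_top
      have hfy_le : fy ≤ s * fz + (1 - s) * fv := by
        rw [hfy, EReal.coe_le_coe_iff] at hcv'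
        exact hcv'
      have hprox := hv y
      rw [hfv, hfy, ← EReal.coe_mul, ← EReal.coe_mul, ← EReal.coe_add, ← EReal.coe_add,
        EReal.coe_le_coe_iff] at hprox
      have hy2 : y - (-p) = (v + p) + s • (z - v) := by
        rw [hy]; module
      have hnorm : ‖y - (-p)‖ ^ 2
          = ‖v + p‖ ^ 2 + 2 * (s * ⟪v + p, z - v⟫) + s ^ 2 * ‖z - v‖ ^ 2 := by
        rw [hy2, norm_add_sq_real, real_inner_smul_right, norm_smul, Real.norm_eq_abs,
          abs_of_pos hs, mul_pow]
      have hvp : v - (-p) = v + p := sub_neg_eq_add v p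
      rw [hvp, hnorm] at hprox
      have h3 : lam * fy ≤ lam * (s * fz + (1 - s) * fv) :=
        mul_le_mul_of_nonneg_left hfy_le hlam.le
      have hinner : ⟪z - v, v + p⟫ = ⟪v + p, z - v⟫ := real_inner_comm _ _
      have hmul : s * (lam * fv) ≤ s * (lam * fz + ⟪v + p, z - v⟫ + s * (‖z - v‖ ^ 2 / 2)) := by
        nlinarith [hprox, h3]
      have hdiv := (mul_le_mul_iff_right₀ hs).mp hmul
      rw [hinner]
      linarith
    refine le_of_forall_pos_le_add fun ε hε => ?_
    set N : ℝ := ‖z - v‖ ^ 2 / 2 with hN_def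
    have hN : 0 ≤ N := by positivity
    set s : ℝ := min 1 (ε / (N + 1)) with hs_def
    have hs : 0 < s := lt_min one_pos (div_pos hε (by positivity))
    have hs1 : s ≤ 1 := min_le_left _ _
    have h4 := hstep s hs hs1
    have h5 : s * N ≤ ε := by
      have h6 : s ≤ ε / (N + 1) := min_le_right _ _
      have h7 : s * N ≤ (ε / (N + 1)) * N := mul_le_mul_of_nonneg_right h6 hN
      have h8 : (ε / (N + 1)) * N ≤ ε := by
        rw [div_mul_eq_mul_div, div_le_iff₀ (by positivity : (0:ℝ) < N + 1)]
        nlinarith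
      linarith
    linarith
  -- the inner product identity `⟪v, v + p⟫ = - lam * f v`
  have hkey_smul : ∀ s : ℝ, 0 < s → lam * fv ≤ lam * (s * fv) + (s - 1) * ⟪v, v + p⟫ := by
    intro s hs
    have h1 : f (s • v) = ((s * fv : ℝ) : EReal) := by
      rw [hpos v s hs, hfv, ← EReal.coe_mul]
    have h2 := key (s • v) (s * fv) h1
    have h3 : s • v - v = (s - 1) • v := by module
    rw [h3, real_inner_smul_left] at h2
    exact h2
  have hvv : ⟪v, v + p⟫ = -(lam * fv) := by
    have h2 := hkey_smul 2 two_pos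
    have hhalf := hkey_smul (1/2) (by norm_num)
    nlinarith [h2, hhalf]
  set xs := tStar • v with hxs
  have hfxs : f xs = ((tStar * fv : ℝ) : EReal) := by
    rw [hxs, hpos v tStar htpos, hfv, ← EReal.coe_mul]
  have hnxs : ‖xs‖ ^ 2 = tStar ^ 2 * ‖v‖ ^ 2 := by
    rw [hxs, norm_smul, Real.norm_eq_abs, mul_pow, sq_abs]
  set S := Real.sqrt (1 + ‖xs‖ ^ 2) with hS_def
  have hS_pos : 0 < S := Real.sqrt_pos.2 (by positivity)
  have hS_sq : S ^ 2 = 1 + ‖xs‖ ^ 2 := Real.sq_sqrt (by positivity)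
  -- gradient of `h` at `xs` equals `v`
  have hw : (α / S + β) • xs = v := by
    by_cases hv0 : v = 0
    · simp [hxs, hv0]
    · have hts := ht hv0
      have hSr : S = Real.sqrt (1 + tStar ^ 2 * ‖v‖ ^ 2) := by rw [hS_def, hnxs]
      have hone : (α / S + β) * tStar = 1 := by
        have hexp : (α / S + β) * tStar = α * tStar / S + β * tStar := by ring
        rw [hexp, hSr]
        linarith [hts]
      rw [hxs, smul_smul, hone, one_smul]
  -- case `f x = ⊤`
  by_cases hx_top : f x = ⊤
  · rw [hfxs, ← EReal.coe_mul, ← EReal.coe_add, hx_top, EReal.mul_top_of_pos hlam',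
      EReal.top_add_coe]
    exact EReal.coe_lt_top _
  -- case `f x` finite
  set fx : ℝ := (f x).toReal with hfx_def
  have hfx : f x = (fx : EReal) := coe_val x hx_top
  rw [hfxs, hfx, ← EReal.coe_mul, ← EReal.coe_mul, ← EReal.coe_add, ← EReal.coe_add,
    EReal.coe_lt_coe_iff]
  -- basic inner product identities
  have k2 : -⟪x, v + p⟫ ≤ lam * fx := by
    have hk := key x fx hfx
    rw [inner_sub_left] at hk
    linarith [hk, hvv]
  have k3 : lam * (tStar * fv) = -⟪xs, v + p⟫ := by
    have : ⟪xs, v + p⟫ = tStar * ⟪v, v + p⟫ := by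
      rw [hxs, real_inner_smul_left]
    rw [this, hvv]; ring
  have iadd_xs : ⟪xs, v + p⟫ = ⟪xs, v⟫ + ⟪xs, p⟫ := inner_add_right xs v p
  have iadd_x : ⟪x, v + p⟫ = ⟪x, v⟫ + ⟪x, p⟫ := inner_add_right x v p
  -- the geometric strict inequality
  have geom : -⟪xs, v⟫ + (α * S + β / 2 * ‖xs‖ ^ 2)
      < -⟪x, v⟫ + (α * Real.sqrt (1 + ‖x‖ ^ 2) + β / 2 * ‖x‖ ^ 2) := by
    set r : ℝ := α / S with hr_def
    have hr0 : 0 ≤ r := div_nonneg hα hS_pos.le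
    have hrS : r * S = α := div_mul_cancel₀ α hS_pos.ne'
    have hixv : ⟪x, v⟫ = (r + β) * ⟪x, xs⟫ := by
      rw [← hw, real_inner_smul_right]
    have hixsv : ⟪xs, v⟫ = (r + β) * ‖xs‖ ^ 2 := by
      rw [← hw, real_inner_smul_right, real_inner_self_eq_norm_sq]
    have hxdecomp : x = xs + (x - xs) := by abel
    have hA : ‖x‖ ^ 2 = ‖xs‖ ^ 2 + 2 * (⟪x, xs⟫ - ‖xs‖ ^ 2) + ‖x - xs‖ ^ 2 := by
      have h1 : ‖x‖ ^ 2 = ‖xs‖ ^ 2 + 2 * ⟪xs, x - xs⟫ + ‖x - xs‖ ^ 2 := by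
        conv_lhs => rw [hxdecomp]
        exact norm_add_sq_real xs (x - xs)
      have h2 : ⟪xs, x - xs⟫ = ⟪x, xs⟫ - ‖xs‖ ^ 2 := by
        rw [inner_sub_right, real_inner_self_eq_norm_sq, real_inner_comm]
      rw [h1, h2]
    have hB : 1 + ⟪x, xs⟫ ≤ S * Real.sqrt (1 + ‖x‖ ^ 2) := by
      have := cs_aux xs x
      rw [real_inner_comm] at this
      rw [hS_def]
      exact this
    have hN : 0 < ‖x - xs‖ ^ 2 := by
      have h0 : x - xs ≠ 0 := sub_ne_zero.mpr hx
      exact pow_pos (norm_pos_iff.mpr h0) 2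
    have hQ : 0 ≤ Real.sqrt (1 + ‖x‖ ^ 2) := Real.sqrt_nonneg _
    have hαS : α * S = r + r * ‖xs‖ ^ 2 := by
      rw [show r + r * ‖xs‖ ^ 2 = r * (1 + ‖xs‖ ^ 2) by ring, ← hS_sq, sq, ← mul_assoc, hrS]
    have hαQ : r * (1 + ⟪x, xs⟫) ≤ α * Real.sqrt (1 + ‖x‖ ^ 2) := by
      have h1 : r * (1 + ⟪x, xs⟫) ≤ r * (S * Real.sqrt (1 + ‖x‖ ^ 2)) :=
        mul_le_mul_of_nonneg_left hB hr0
      have h2 : r * (S * Real.sqrt (1 + ‖x‖ ^ 2)) = α * Real.sqrt (1 + ‖x‖ ^ 2) := by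
        rw [← hrS]; ring
      linarith
    have hAβ : β / 2 * ‖x‖ ^ 2
        = β / 2 * ‖xs‖ ^ 2 + β * ⟪x, xs⟫ - β * ‖xs‖ ^ 2 + β / 2 * ‖x - xs‖ ^ 2 := by
      rw [hA]; ring
    have hβN : 0 < β * ‖x - xs‖ ^ 2 := mul_pos hβ hN
    rw [hixv, hixsv]
    linarith [hαS, hαQ, hAβ, hβN]
  linarith [k2, k3, geom, iadd_xs, iadd_x]
end
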